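/- Preservation (subject reduction) for the ATM type system: if Γ ⊢_ATM c : ρ and c → c', then Γ ⊢_ATM c' : ρ. -/

import Mathlib

namespace LEH

/-! ## Syntax of λEH (finitary PCF with effect handlers), extended with records,
    in de Bruijn representation.  A handler is represented by its return clause
    (one binder) and, for each operation name `o : ℕ`, an operation clause
    (two binders: the parameter `x` at index 1 and the continuation `k` at index 0). -/

mutual
inductive Val : Type
| var (n : ℕ)
| unit
| tt
| ff
| lam (c : Comp)
| fix (v : Val)              -- rec x = v
| record (f : ℕ → Val)
inductive Comp : Type
| ret (v : Val)
| op (o : ℕ) (v : Val)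
| app (v₁ v₂ : Val)
| ite (v : Val) (c₁ c₂ : Comp)
| letin (c₁ c₂ : Comp)
| handle (hret : Comp) (hops : ℕ → Comp) (c : Comp)
| proj (v : Val) (l : ℕ)
end

def liftR (ξ : ℕ → ℕ) : ℕ → ℕ
| 0 => 0
| n+1 => ξ n + 1

mutual
def renameV (ξ : ℕ → ℕ) : Val → Val
| .var n => .var (ξ n)
| .unit => .unit
| .tt => .tt
| .ff => .ff
| .lam c => .lam (renameC (liftR ξ) c)
| .fix v => .fix (renameV (liftR ξ) v)
| .record f => .record (fun o => renameV ξ (f o))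
def renameC (ξ : ℕ → ℕ) : Comp → Comp
| .ret v => .ret (renameV ξ v)
| .op o v => .op o (renameV ξ v)
| .app v₁ v₂ => .app (renameV ξ v₁) (renameV ξ v₂)
| .ite v c₁ c₂ => .ite (renameV ξ v) (renameC ξ c₁) (renameC ξ c₂)
| .letin c₁ c₂ => .letin (renameC ξ c₁) (renameC (liftR ξ) c₂)
| .handle r ops c =>
    .handle (renameC (liftR ξ) r) (fun o => renameC (liftR (liftR ξ)) (ops o)) (renameC ξ c)
| .proj v l => .proj (renameV ξ v) l
end

def liftS (σ : ℕ → Val) : ℕ → Val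
| 0 => .var 0
| n+1 => renameV Nat.succ (σ n)

mutual
def substV (σ : ℕ → Val) : Val → Val
| .var n => σ n
| .unit => .unit
| .tt => .tt
| .ff => .ff
| .lam c => .lam (substC (liftS σ) c)
| .fix v => .fix (substV (liftS σ) v)
| .record f => .record (fun o => substV σ (f o))
def substC (σ : ℕ → Val) : Comp → Comp
| .ret v => .ret (substV σ v)
| .op o v => .op o (substV σ v)
| .app v₁ v₂ => .app (substV σ v₁) (substV σ v₂)
| .ite v c₁ c₂ => .ite (substV σ v) (substC σ c₁) (substC σ c₂)
| .letin c₁ c₂ => .letin (substC σ c₁) (substC (liftS σ) c₂)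
| .handle r ops c =>
    .handle (substC (liftS σ) r) (fun o => substC (liftS (liftS σ)) (ops o)) (substC σ c)
| .proj v l => .proj (substV σ v) l
end

/-- substitution of a single value for de Bruijn index 0 -/
def sub1 (v : Val) : ℕ → Val
| 0 => v
| n+1 => .var n

/-- substitution of two values: index 1 ↦ `x` (operation parameter),
    index 0 ↦ `k` (captured continuation) -/
def sub2 (x k : Val) : ℕ → Val
| 0 => k
| 1 => x
| n+2 => .var n

def subst1C (c : Comp) (v : Val) : Comp := substC (sub1 v) c
def subst1V (w : Val) (v : Val) : Val := substV (sub1 v) w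

/-! ## Evaluation contexts and small-step operational semantics -/

inductive EC : Type
| hole
| letE (E : EC) (c : Comp)

def plug : EC → Comp → Comp
| .hole, c => c
| .letE E c₂, c => .letin (plug E c) c₂

def renameE (ξ : ℕ → ℕ) : EC → EC
| .hole => .hole
| .letE E c => .letE (renameE ξ E) (renameC (liftR ξ) c)

/-- the captured delimited continuation `λ y. with h handle E[return y]` -/
def contOf (r : Comp) (ops : ℕ → Comp) (E : EC) : Val :=
  .lam (.handle (renameC (liftR Nat.succ) r)
    (fun o => renameC (liftR (liftR Nat.succ)) (ops o))
    (plug (renameE Nat.succ E) (.ret (.var 0))))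

inductive Step : Comp → Comp → Prop
| letc {c₁ c₂ c} : Step c₁ c₂ → Step (.letin c₁ c) (.letin c₂ c)
| letret {v c} : Step (.letin (.ret v) c) (subst1C c v)
| lamapp {c v} : Step (.app (.lam c) v) (subst1C c v)
| fixapp {v v'} : Step (.app (.fix v) v') (.app (subst1V v (.fix v)) v')
| iftrue {c₁ c₂} : Step (.ite .tt c₁ c₂) c₁
| iffalse {c₁ c₂} : Step (.ite .ff c₁ c₂) c₂
| han {r ops c c'} : Step c c' → Step (.handle r ops c) (.handle r ops c')
| hret {r ops v} : Step (.handle r ops (.ret v)) (subst1C r v)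
| hop {r ops E o v} :
    Step (.handle r ops (plug E (.op o v)))
      (substC (sub2 v (contOf r ops E)) (ops o))
| projr {f l} : Step (.proj (.record f) l) (.ret (f l))

abbrev StepStar : Comp → Comp → Prop := Relation.ReflTransGen Step
abbrev StepPlus : Comp → Comp → Prop := Relation.TransGen Step

/-! ## ATM types and subtyping -/

mutual
inductive VTy : Type
| unit
| bool
| arrow (τ : VTy) (ρ : CTy)
inductive CTy : Type
| pure (τ : VTy)
| eff (τ : VTy) (ρ₁ ρ₂ : CTy)
end

mutual
inductive SubV : VTy → VTy → Prop
| unit : SubV .unit .unit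
| bool : SubV .bool .bool
| arrow {τ₁ τ₂ ρ₁ ρ₂} : SubV τ₂ τ₁ → SubC ρ₁ ρ₂ → SubV (.arrow τ₁ ρ₁) (.arrow τ₂ ρ₂)
inductive SubC : CTy → CTy → Prop
| pure {τ₁ τ₂} : SubV τ₁ τ₂ → SubC (.pure τ₁) (.pure τ₂)
| ipure {τ₁ τ₂ ρ₁ ρ₂ ρ₁' ρ₂'} :
    SubV τ₁ τ₂ → SubC ρ₂ ρ₁ → SubC ρ₁' ρ₂' → SubC (.eff τ₁ ρ₁ ρ₁') (.eff τ₂ ρ₂ ρ₂')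
| embed {τ₁ τ₂ ρ₁ ρ₂} : SubV τ₁ τ₂ → SubC ρ₁ ρ₂ → SubC (.pure τ₁) (.eff τ₂ ρ₁ ρ₂)
end

/-- An operation signature Σ: each operation `o` has type
    `arg o → res o / ans1 o ⇒ ans2 o`. -/
structure Sig where
  arg : ℕ → VTy
  res : ℕ → VTy
  ans1 : ℕ → CTy
  ans2 : ℕ → CTy

/-! ## The ATM type system ⊢_ATM -/

mutual
inductive TV : Sig → List VTy → Val → VTy → Prop
| unit {S Γ} : TV S Γ .unit .unit
| tt {S Γ} : TV S Γ .tt .bool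
| ff {S Γ} : TV S Γ .ff .bool
| var {S Γ n τ} : Γ[n]? = some τ → TV S Γ (.var n) τ
| lam {S Γ τ c ρ} : TC S (τ :: Γ) c ρ → TV S Γ (.lam c) (.arrow τ ρ)
| fix {S Γ τ v} : TV S (τ :: Γ) v τ → TV S Γ (.fix v) τ
| vsub {S Γ v τ τ'} : TV S Γ v τ → SubV τ τ' → TV S Γ v τ'
inductive TC : Sig → List VTy → Comp → CTy → Prop
| ret {S Γ v τ} : TV S Γ v τ → TC S Γ (.ret v) (.pure τ)
| app {S Γ v₁ v₂ τ ρ} : TV S Γ v₁ (.arrow τ ρ) → TV S Γ v₂ τ → TC S Γ (.app v₁ v₂) ρ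
| ite {S Γ v c₁ c₂ ρ} :
    TV S Γ v .bool → TC S Γ c₁ ρ → TC S Γ c₂ ρ → TC S Γ (.ite v c₁ c₂) ρ
| letP {S Γ c₁ c₂ τ₁ τ₂} :
    TC S Γ c₁ (.pure τ₁) → TC S (τ₁ :: Γ) c₂ (.pure τ₂) →
    TC S Γ (.letin c₁ c₂) (.pure τ₂)
| letIp {S Γ c₁ c₂ τ₁ τ₂ ρ₁ ρ₁' ρ₂} :
    TC S Γ c₁ (.eff τ₁ ρ₁ ρ₁') → TC S (τ₁ :: Γ) c₂ (.eff τ₂ ρ₂ ρ₁) →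
    TC S Γ (.letin c₁ c₂) (.eff τ₂ ρ₂ ρ₁')
| op {S Γ o v} : TV S Γ v (S.arg o) → TC S Γ (.op o v) (.eff (S.res o) (S.ans1 o) (S.ans2 o))
| handle {S Γ r ops c τ ρ ρ'} :
    (∀ o, TC S (.arrow (S.res o) (S.ans1 o) :: S.arg o :: Γ) (ops o) (S.ans2 o)) →
    TC S (τ :: Γ) r ρ →
    TC S Γ c (.eff τ ρ ρ') →
    TC S Γ (.handle r ops c) ρ'
| csub {S Γ c ρ ρ'} : TC S Γ c ρ → SubC ρ ρ' → TC S Γ c ρ'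
end

/-! ## Simple types and the simple type system ⊢_ST (on λEH with records).
    `STy.sig` is the record type `⟦Σ⟧`; the system is parametrized by an
    interpretation `I : ℕ → STy` of its fields and by an operation
    signature `SS`. -/

inductive STy : Type
| unit
| bool
| arrow (σ₁ σ₂ : STy)
| sig

structure SigS where
  arg : ℕ → STy
  res : ℕ → STy

mutual
inductive SV : (ℕ → STy) → SigS → List STy → Val → STy → Prop
| unit {I SS Γ} : SV I SS Γ .unit .unit
| tt {I SS Γ} : SV I SS Γ .tt .bool
| ff {I SS Γ} : SV I SS Γ .ff .bool
| var {I SS Γ n σ} : Γ[n]? = some σ → SV I SS Γ (.var n) σ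
| lam {I SS Γ σ c σ'} : SC I SS (σ :: Γ) c σ' → SV I SS Γ (.lam c) (.arrow σ σ')
| fix {I SS Γ σ v} : SV I SS (σ :: Γ) v σ → SV I SS Γ (.fix v) σ
| record {I SS Γ f} : (∀ o, SV I SS Γ (f o) (I o)) → SV I SS Γ (.record f) .sig
inductive SC : (ℕ → STy) → SigS → List STy → Comp → STy → Prop
| ret {I SS Γ v σ} : SV I SS Γ v σ → SC I SS Γ (.ret v) σ
| app {I SS Γ v₁ v₂ σ σ'} :
    SV I SS Γ v₁ (.arrow σ σ') → SV I SS Γ v₂ σ → SC I SS Γ (.app v₁ v₂) σ'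
| ite {I SS Γ v c₁ c₂ σ} :
    SV I SS Γ v .bool → SC I SS Γ c₁ σ → SC I SS Γ c₂ σ → SC I SS Γ (.ite v c₁ c₂) σ
| letin {I SS Γ c₁ c₂ σ σ'} :
    SC I SS Γ c₁ σ → SC I SS (σ :: Γ) c₂ σ' → SC I SS Γ (.letin c₁ c₂) σ'
| op {I SS Γ o v} : SV I SS Γ v (SS.arg o) → SC I SS Γ (.op o v) (SS.res o)
| handle {I SS Γ r ops c σ σ'} :
    SC I SS (σ :: Γ) r σ' →
    (∀ o, SC I SS (.arrow (SS.res o) σ' :: SS.arg o :: Γ) (ops o) σ') →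
    SC I SS Γ c σ →
    SC I SS Γ (.handle r ops c) σ'
| proj {I SS Γ v l} : SV I SS Γ v .sig → SC I SS Γ (.proj v l) (I l)
end

/-! ## Derivation trees (Type-valued) for subtyping and ATM typing,
    used by the typing-derivation-directed CPS transformation -/

mutual
inductive SubVD : VTy → VTy → Type
| unit : SubVD .unit .unit
| bool : SubVD .bool .bool
| arrow {τ₁ τ₂ ρ₁ ρ₂} : SubVD τ₂ τ₁ → SubCD ρ₁ ρ₂ → SubVD (.arrow τ₁ ρ₁) (.arrow τ₂ ρ₂)
inductive SubCD : CTy → CTy → Type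
| pure {τ₁ τ₂} : SubVD τ₁ τ₂ → SubCD (.pure τ₁) (.pure τ₂)
| ipure {τ₁ τ₂ ρ₁ ρ₂ ρ₁' ρ₂'} :
    SubVD τ₁ τ₂ → SubCD ρ₂ ρ₁ → SubCD ρ₁' ρ₂' → SubCD (.eff τ₁ ρ₁ ρ₁') (.eff τ₂ ρ₂ ρ₂')
| embed {τ₁ τ₂ ρ₁ ρ₂} : SubVD τ₁ τ₂ → SubCD ρ₁ ρ₂ → SubCD (.pure τ₁) (.eff τ₂ ρ₁ ρ₂)
end

mutual
inductive TVD : Sig → List VTy → Val → VTy → Type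
| unit {S Γ} : TVD S Γ .unit .unit
| tt {S Γ} : TVD S Γ .tt .bool
| ff {S Γ} : TVD S Γ .ff .bool
| var {S Γ τ} (n : ℕ) : Γ[n]? = some τ → TVD S Γ (.var n) τ
| lam {S Γ τ c ρ} : TCD S (τ :: Γ) c ρ → TVD S Γ (.lam c) (.arrow τ ρ)
| fix {S Γ τ v} : TVD S (τ :: Γ) v τ → TVD S Γ (.fix v) τ
| vsub {S Γ v τ τ'} : TVD S Γ v τ → SubVD τ τ' → TVD S Γ v τ'
inductive TCD : Sig → List VTy → Comp → CTy → Type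
| ret {S Γ v τ} : TVD S Γ v τ → TCD S Γ (.ret v) (.pure τ)
| app {S Γ v₁ v₂ τ ρ} : TVD S Γ v₁ (.arrow τ ρ) → TVD S Γ v₂ τ → TCD S Γ (.app v₁ v₂) ρ
| ite {S Γ v c₁ c₂ ρ} :
    TVD S Γ v .bool → TCD S Γ c₁ ρ → TCD S Γ c₂ ρ → TCD S Γ (.ite v c₁ c₂) ρ
| letP {S Γ c₁ c₂ τ₁ τ₂} :
    TCD S Γ c₁ (.pure τ₁) → TCD S (τ₁ :: Γ) c₂ (.pure τ₂) →
    TCD S Γ (.letin c₁ c₂) (.pure τ₂)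
| letIp {S Γ c₁ c₂ τ₁ τ₂ ρ₁ ρ₁' ρ₂} :
    TCD S Γ c₁ (.eff τ₁ ρ₁ ρ₁') → TCD S (τ₁ :: Γ) c₂ (.eff τ₂ ρ₂ ρ₁) →
    TCD S Γ (.letin c₁ c₂) (.eff τ₂ ρ₂ ρ₁')
| op {S Γ} (o : ℕ) {v} :
    TVD S Γ v (S.arg o) → TCD S Γ (.op o v) (.eff (S.res o) (S.ans1 o) (S.ans2 o))
| handle {S Γ r ops c τ ρ ρ'} :
    (∀ o, TCD S (.arrow (S.res o) (S.ans1 o) :: S.arg o :: Γ) (ops o) (S.ans2 o)) →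
    TCD S (τ :: Γ) r ρ →
    TCD S Γ c (.eff τ ρ ρ') →
    TCD S Γ (.handle r ops c) ρ'
| csub {S Γ c ρ ρ'} : TCD S Γ c ρ → SubCD ρ ρ' → TCD S Γ c ρ'
end

/-! ## The CPS transformation -/

/-! CPS transformation of ATM value and computation types into simple types;
    `⟦τ/ρ₁⇒ρ₂⟧ = ⟦Σ⟧ → (⟦τ⟧ → ⟦ρ₁⟧) → ⟦ρ₂⟧`, where `⟦Σ⟧` is `STy.sig`. -/
mutual
def cpsT : VTy → STy
| .unit => .unit
| .bool => .bool
| .arrow τ ρ => .arrow (cpsT τ) (cpsCT ρ)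
def cpsCT : CTy → STy
| .pure τ => cpsT τ
| .eff τ ρ₁ ρ₂ => .arrow .sig (.arrow (.arrow (cpsT τ) (cpsCT ρ₁)) (cpsCT ρ₂))
end

/-- the field types of the record type `⟦Σ⟧` -/
def opSTy (S : Sig) : ℕ → STy := fun o =>
  .arrow (cpsT (S.arg o)) (.arrow (.arrow (cpsT (S.res o)) (cpsCT (S.ans1 o))) (cpsCT (S.ans2 o)))

/-- application of a computation to a computation (left-to-right sequencing sugar) -/
def apc (c₁ c₂ : Comp) : Comp :=
  .letin c₁ (.letin (renameC Nat.succ c₂) (.app (.var 1) (.var 0)))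

/-! CPS transformation of subtyping derivations, given as the coercion
    they induce on (already-transformed) terms; the static applications `@`
    of the paper are performed on the fly. -/
mutual
def coerceV : {τ τ' : VTy} → SubVD τ τ' → Val → Val
| _, _, .unit, v => v
| _, _, .bool, v => v
| _, _, .arrow d21 d12, f =>
    .lam (coerceC d12 (.app (renameV Nat.succ f) (coerceV d21 (.var 0))))
def coerceC : {ρ ρ' : CTy} → SubCD ρ ρ' → Comp → Comp
| _, _, .pure d, c => .letin c (.ret (coerceV d (.var 0)))
| _, _, .ipure dT d21 d12, c =>
    .ret (.lam (.ret (.lam (coerceC d12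
      (apc (apc (renameC (fun n => n + 2) c) (.ret (.var 1)))
        (.ret (.lam (coerceC d21 (apc (.ret (.var 1)) (.ret (coerceV dT (.var 0))))))))))))
| _, _, .embed dT dR, c =>
    .ret (.lam (.ret (.lam (coerceC dR
      (.letin (renameC (fun n => n + 2) c)
        (apc (.ret (.var 1)) (.ret (coerceV dT (.var 0)))))))))
end

/-! the typing-derivation-directed CPS transformation -/
mutual
def cpsV {S : Sig} : {Γ : List VTy} → {v : Val} → {τ : VTy} → TVD S Γ v τ → Val
| _, _, _, .unit => .unit
| _, _, _, .tt => .tt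
| _, _, _, .ff => .ff
| _, _, _, .var n _ => .var n
| _, _, _, .lam D => .lam (cpsC D)
| _, _, _, .fix D => .fix (cpsV D)
| _, _, _, .vsub D d => coerceV d (cpsV D)
def cpsC {S : Sig} : {Γ : List VTy} → {c : Comp} → {ρ : CTy} → TCD S Γ c ρ → Comp
| _, _, _, .ret D => .ret (cpsV D)
| _, _, _, .app D₁ D₂ => .app (cpsV D₁) (cpsV D₂)
| _, _, _, .ite Dv D₁ D₂ => .ite (cpsV Dv) (cpsC D₁) (cpsC D₂)
| _, _, _, .letP D₁ D₂ => .letin (cpsC D₁) (cpsC D₂)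
| _, _, _, .letIp D₁ D₂ =>
    .ret (.lam (.ret (.lam (apc (apc (renameC (fun n => n + 2) (cpsC D₁)) (.ret (.var 1)))
      (.ret (.lam (apc (apc (renameC (liftR (fun n => n + 2)) (cpsC D₂)) (.ret (.var 2)))
        (.ret (.var 1)))))))))
| _, _, _, .op o Dv =>
    .ret (.lam (.ret (.lam (apc (apc (.proj (.var 1) o)
      (.ret (renameV (fun n => n + 2) (cpsV Dv)))) (.ret (.var 0))))))
| _, _, _, .handle Dops Dret Dc =>
    apc (apc (cpsC Dc) (.ret (.record (fun o => .lam (.ret (.lam (cpsC (Dops o))))))))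
      (.ret (.lam (cpsC Dret)))
| _, _, _, .csub D d => coerceC d (cpsC D)
end

/-- `⟦D⟧ v_h v_k`: applying a CPS-transformed effectful computation to a
    (translated) handler record and continuation -/
def capp2 (c : Comp) (vh vk : Val) : Comp := apc (apc c (.ret vh)) (.ret vk)

/-! ## Effect-handler-freeness and rec-freeness -/

mutual
def hfV : Val → Prop
| .var _ => True
| .unit => True
| .tt => True
| .ff => True
| .lam c => hfC c
| .fix v => hfV v
| .record f => ∀ o, hfV (f o)
def hfC : Comp → Prop
| .ret v => hfV v
| .op _ _ => False
| .app v₁ v₂ => hfV v₁ ∧ hfV v₂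
| .ite v c₁ c₂ => hfV v ∧ hfC c₁ ∧ hfC c₂
| .letin c₁ c₂ => hfC c₁ ∧ hfC c₂
| .handle _ _ _ => False
| .proj v _ => hfV v
end

mutual
def recFreeV : Val → Prop
| .var _ => True
| .unit => True
| .tt => True
| .ff => True
| .lam c => recFreeC c
| .fix _ => False
| .record f => ∀ o, recFreeV (f o)
def recFreeC : Comp → Prop
| .ret v => recFreeV v
| .op _ v => recFreeV v
| .app v₁ v₂ => recFreeV v₁ ∧ recFreeV v₂
| .ite v c₁ c₂ => recFreeV v ∧ recFreeC c₁ ∧ recFreeC c₂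
| .letin c₁ c₂ => recFreeC c₁ ∧ recFreeC c₂
| .handle r ops c => recFreeC r ∧ (∀ o, recFreeC (ops o)) ∧ recFreeC c
| .proj v _ => recFreeV v
end

end LEH

/-!
All cases but (E-Op) follow from inversion modulo subsumption and the substitution lemma.
For (E-Op), inverting `with h handle E[op o v]` at `τ/ρ⇒ρ'` shows that `E[return y]`, for
`y : res o`, has type `τ/ρ⇒ans1 o`: `return y` enters through the embedding of `res o` into
`res o/ρ₁⇒ρ₁`, and each `let` of `E` composes answer types. The handling rule then gives the
captured continuation the type `res o → ans1 o` that the operation clause expects, and the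
clause's type `ans2 o` lies below `ρ'`.
-/

namespace LEH

mutual
theorem SubV.refl : ∀ τ, SubV τ τ
  | .unit => .unit
  | .bool => .bool
  | .arrow τ ρ => .arrow (SubV.refl τ) (SubC.refl ρ)
theorem SubC.refl : ∀ ρ, SubC ρ ρ
  | .pure τ => .pure (SubV.refl τ)
  | .eff τ ρ₁ ρ₂ => .ipure (SubV.refl τ) (SubC.refl ρ₁) (SubC.refl ρ₂)
end

mutual
theorem SubV.trans : ∀ {τ₁ τ₂ τ₃ : VTy}, SubV τ₁ τ₂ → SubV τ₂ τ₃ → SubV τ₁ τ₃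
  | _, _, _, .unit, h => h
  | _, _, _, .bool, h => h
  | _, _, _, .arrow d e, .arrow d' e' => .arrow (d'.trans d) (e.trans e')
theorem SubC.trans : ∀ {ρ₁ ρ₂ ρ₃ : CTy}, SubC ρ₁ ρ₂ → SubC ρ₂ ρ₃ → SubC ρ₁ ρ₃
  | _, _, _, .pure d, .pure d' => .pure (d.trans d')
  | _, _, _, .pure d, .embed d' e' => .embed (d.trans d') e'
  | _, _, _, .ipure d e f, .ipure d' e' f' => .ipure (d.trans d') (e'.trans e) (f.trans f')
  | _, _, _, .embed d e, .ipure d' e' f' => .embed (d.trans d') (e'.trans (e.trans f'))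
end

def WellTypedRen (ξ : ℕ → ℕ) (Γ Δ : List VTy) : Prop :=
  ∀ n τ, Γ[n]? = some τ → Δ[ξ n]? = some τ

theorem WellTypedRen.lift {ξ Γ Δ τ} (h : WellTypedRen ξ Γ Δ) :
    WellTypedRen (liftR ξ) (τ :: Γ) (τ :: Δ)
  | 0, _, hn => hn
  | n + 1, σ, hn => h n σ hn

theorem WellTypedRen.succ {Γ : List VTy} {τ} : WellTypedRen Nat.succ Γ (τ :: Γ) :=
  fun _ _ h => h

mutual
theorem TV.rename {S Γ v τ} :
    TV S Γ v τ → ∀ {ξ Δ}, WellTypedRen ξ Γ Δ → TV S Δ (renameV ξ v) τ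
  | .unit, _, _, _ => .unit
  | .tt, _, _, _ => .tt
  | .ff, _, _, _ => .ff
  | .var hn, _, _, hξ => .var (hξ _ _ hn)
  | .lam h, _, _, hξ => .lam (h.rename hξ.lift)
  | .fix h, _, _, hξ => .fix (h.rename hξ.lift)
  | .vsub h s, _, _, hξ => .vsub (h.rename hξ) s
theorem TC.rename {S Γ c ρ} :
    TC S Γ c ρ → ∀ {ξ Δ}, WellTypedRen ξ Γ Δ → TC S Δ (renameC ξ c) ρ
  | .ret h, _, _, hξ => .ret (h.rename hξ)
  | .app h₁ h₂, _, _, hξ => .app (h₁.rename hξ) (h₂.rename hξ)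
  | .ite h h₁ h₂, _, _, hξ => .ite (h.rename hξ) (h₁.rename hξ) (h₂.rename hξ)
  | .letP h₁ h₂, _, _, hξ => .letP (h₁.rename hξ) (h₂.rename hξ.lift)
  | .letIp h₁ h₂, _, _, hξ => .letIp (h₁.rename hξ) (h₂.rename hξ.lift)
  | .op h, _, _, hξ => .op (h.rename hξ)
  | .handle hops hr hc, _, _, hξ =>
    .handle (fun o => (hops o).rename hξ.lift.lift) (hr.rename hξ.lift) (hc.rename hξ)
  | .csub h s, _, _, hξ => .csub (h.rename hξ) s
end

def WellTypedSubst (S : Sig) (σ : ℕ → Val) (Γ Δ : List VTy) : Prop :=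
  ∀ n τ, Γ[n]? = some τ → TV S Δ (σ n) τ

theorem WellTypedSubst.lift {S σ Γ Δ τ} (h : WellTypedSubst S σ Γ Δ) :
    WellTypedSubst S (liftS σ) (τ :: Γ) (τ :: Δ)
  | 0, _, hn => .var hn
  | n + 1, τ', hn => (h n τ' hn).rename .succ

theorem WellTypedSubst.sub1 {S Γ v τ} (hv : TV S Γ v τ) : WellTypedSubst S (sub1 v) (τ :: Γ) Γ
  | 0, _, hn => by cases hn; exact hv
  | n + 1, _, hn => .var hn

theorem WellTypedSubst.sub2 {S Γ x k τx τk} (hx : TV S Γ x τx) (hk : TV S Γ k τk) :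
    WellTypedSubst S (sub2 x k) (τk :: τx :: Γ) Γ
  | 0, _, hn => by cases hn; exact hk
  | 1, _, hn => by cases hn; exact hx
  | n + 2, _, hn => .var hn

mutual
theorem TV.subst {S Γ v τ} :
    TV S Γ v τ → ∀ {σ Δ}, WellTypedSubst S σ Γ Δ → TV S Δ (substV σ v) τ
  | .unit, _, _, _ => .unit
  | .tt, _, _, _ => .tt
  | .ff, _, _, _ => .ff
  | .var hn, _, _, hσ => hσ _ _ hn
  | .lam h, _, _, hσ => .lam (h.subst hσ.lift)
  | .fix h, _, _, hσ => .fix (h.subst hσ.lift)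
  | .vsub h s, _, _, hσ => .vsub (h.subst hσ) s
theorem TC.subst {S Γ c ρ} :
    TC S Γ c ρ → ∀ {σ Δ}, WellTypedSubst S σ Γ Δ → TC S Δ (substC σ c) ρ
  | .ret h, _, _, hσ => .ret (h.subst hσ)
  | .app h₁ h₂, _, _, hσ => .app (h₁.subst hσ) (h₂.subst hσ)
  | .ite h h₁ h₂, _, _, hσ => .ite (h.subst hσ) (h₁.subst hσ) (h₂.subst hσ)
  | .letP h₁ h₂, _, _, hσ => .letP (h₁.subst hσ) (h₂.subst hσ.lift)
  | .letIp h₁ h₂, _, _, hσ => .letIp (h₁.subst hσ) (h₂.subst hσ.lift)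
  | .op h, _, _, hσ => .op (h.subst hσ)
  | .handle hops hr hc, _, _, hσ =>
    .handle (fun o => (hops o).subst hσ.lift.lift) (hr.subst hσ.lift) (hc.subst hσ)
  | .csub h s, _, _, hσ => .csub (h.subst hσ) s
end

theorem TV.subst1 {S Γ w v τ τ'} (hw : TV S (τ :: Γ) w τ') (hv : TV S Γ v τ) :
    TV S Γ (subst1V w v) τ' :=
  hw.subst (.sub1 hv)

theorem TC.subst1 {S Γ c v τ ρ} (hc : TC S (τ :: Γ) c ρ) (hv : TV S Γ v τ) :
    TC S Γ (subst1C c v) ρ :=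
  hc.subst (.sub1 hv)

theorem TV.lam_inv {S} : ∀ {Γ w τ'}, TV S Γ w τ' → ∀ {c}, w = .lam c →
    ∃ τ ρ, TC S (τ :: Γ) c ρ ∧ SubV (.arrow τ ρ) τ'
  | _, _, _, .lam h, _, rfl => ⟨_, _, h, .refl _⟩
  | _, _, _, .vsub h s, _, hw => let ⟨τ, ρ, hc, s'⟩ := h.lam_inv hw; ⟨τ, ρ, hc, s'.trans s⟩
  | _, _, _, .unit, _, hw | _, _, _, .tt, _, hw | _, _, _, .ff, _, hw | _, _, _, .var _, _, hw
  | _, _, _, .fix _, _, hw => nomatch hw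

theorem TV.fix_inv {S} : ∀ {Γ w τ'}, TV S Γ w τ' → ∀ {v}, w = .fix v →
    ∃ τ, TV S (τ :: Γ) v τ ∧ SubV τ τ'
  | _, _, _, .fix h, _, rfl => ⟨_, h, .refl _⟩
  | _, _, _, .vsub h s, _, hw => let ⟨τ, hv, s'⟩ := h.fix_inv hw; ⟨τ, hv, s'.trans s⟩
  | _, _, _, .unit, _, hw | _, _, _, .tt, _, hw | _, _, _, .ff, _, hw | _, _, _, .var _, _, hw
  | _, _, _, .lam _, _, hw => nomatch hw

theorem TC.ret_inv {S} : ∀ {Γ c ρ}, TC S Γ c ρ → ∀ {v}, c = .ret v →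
    ∃ τ, TV S Γ v τ ∧ SubC (.pure τ) ρ
  | _, _, _, .ret h, _, rfl => ⟨_, h, .refl _⟩
  | _, _, _, .csub h s, _, hc => let ⟨τ, hv, s'⟩ := h.ret_inv hc; ⟨τ, hv, s'.trans s⟩
  | _, _, _, .app .., _, hc | _, _, _, .ite .., _, hc | _, _, _, .letP .., _, hc
  | _, _, _, .letIp .., _, hc | _, _, _, .op .., _, hc | _, _, _, .handle .., _, hc => nomatch hc

theorem TC.op_inv {S} : ∀ {Γ c ρ}, TC S Γ c ρ → ∀ {o v}, c = .op o v →
    TV S Γ v (S.arg o) ∧ SubC (.eff (S.res o) (S.ans1 o) (S.ans2 o)) ρ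
  | _, _, _, .op h, _, _, rfl => ⟨h, .refl _⟩
  | _, _, _, .csub h s, _, _, hc => let ⟨hv, s'⟩ := h.op_inv hc; ⟨hv, s'.trans s⟩
  | _, _, _, .ret .., _, _, hc | _, _, _, .app .., _, _, hc | _, _, _, .ite .., _, _, hc
  | _, _, _, .letP .., _, _, hc | _, _, _, .letIp .., _, _, hc
  | _, _, _, .handle .., _, _, hc => nomatch hc

theorem TC.app_inv {S} : ∀ {Γ c ρ}, TC S Γ c ρ → ∀ {v₁ v₂}, c = .app v₁ v₂ →
    ∃ τ ρ₀, TV S Γ v₁ (.arrow τ ρ₀) ∧ TV S Γ v₂ τ ∧ SubC ρ₀ ρ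
  | _, _, _, .app h₁ h₂, _, _, rfl => ⟨_, _, h₁, h₂, .refl _⟩
  | _, _, _, .csub h s, _, _, hc =>
    let ⟨τ, ρ₀, h₁, h₂, s'⟩ := h.app_inv hc; ⟨τ, ρ₀, h₁, h₂, s'.trans s⟩
  | _, _, _, .ret .., _, _, hc | _, _, _, .ite .., _, _, hc | _, _, _, .letP .., _, _, hc
  | _, _, _, .letIp .., _, _, hc | _, _, _, .op .., _, _, hc
  | _, _, _, .handle .., _, _, hc => nomatch hc

theorem TC.ite_inv {S} : ∀ {Γ c ρ}, TC S Γ c ρ → ∀ {v c₁ c₂}, c = .ite v c₁ c₂ →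
    TV S Γ v .bool ∧ TC S Γ c₁ ρ ∧ TC S Γ c₂ ρ
  | _, _, _, .ite hv h₁ h₂, _, _, _, rfl => ⟨hv, h₁, h₂⟩
  | _, _, _, .csub h s, _, _, _, hc => let ⟨hv, h₁, h₂⟩ := h.ite_inv hc; ⟨hv, h₁.csub s, h₂.csub s⟩
  | _, _, _, .ret .., _, _, _, hc | _, _, _, .app .., _, _, _, hc
  | _, _, _, .letP .., _, _, _, hc | _, _, _, .letIp .., _, _, _, hc
  | _, _, _, .op .., _, _, _, hc | _, _, _, .handle .., _, _, _, hc => nomatch hc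

theorem TC.letin_inv {S} : ∀ {Γ c ρ}, TC S Γ c ρ → ∀ {c₁ c₂}, c = .letin c₁ c₂ →
    (∃ τ₁ τ₂, TC S Γ c₁ (.pure τ₁) ∧ TC S (τ₁ :: Γ) c₂ (.pure τ₂) ∧ SubC (.pure τ₂) ρ) ∨
    (∃ τ₁ τ₂ ρ₁ ρ₁' ρ₂, TC S Γ c₁ (.eff τ₁ ρ₁ ρ₁') ∧ TC S (τ₁ :: Γ) c₂ (.eff τ₂ ρ₂ ρ₁) ∧
      SubC (.eff τ₂ ρ₂ ρ₁') ρ)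
  | _, _, _, .letP h₁ h₂, _, _, rfl => .inl ⟨_, _, h₁, h₂, .refl _⟩
  | _, _, _, .letIp h₁ h₂, _, _, rfl => .inr ⟨_, _, _, _, _, h₁, h₂, .refl _⟩
  | _, _, _, .csub h s, _, _, hc => by
    rcases h.letin_inv hc with ⟨τ₁, τ₂, h₁, h₂, s'⟩ | ⟨τ₁, τ₂, ρ₁, ρ₁', ρ₂, h₁, h₂, s'⟩
    · exact .inl ⟨τ₁, τ₂, h₁, h₂, s'.trans s⟩
    · exact .inr ⟨τ₁, τ₂, ρ₁, ρ₁', ρ₂, h₁, h₂, s'.trans s⟩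
  | _, _, _, .ret .., _, _, hc | _, _, _, .app .., _, _, hc | _, _, _, .ite .., _, _, hc
  | _, _, _, .op .., _, _, hc | _, _, _, .handle .., _, _, hc => nomatch hc

theorem TC.handle_inv {S} : ∀ {Γ c ρ}, TC S Γ c ρ → ∀ {r ops c₀}, c = .handle r ops c₀ →
    ∃ τ ρ₀ ρ', (∀ o, TC S (.arrow (S.res o) (S.ans1 o) :: S.arg o :: Γ) (ops o) (S.ans2 o)) ∧
      TC S (τ :: Γ) r ρ₀ ∧ TC S Γ c₀ (.eff τ ρ₀ ρ') ∧ SubC ρ' ρ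
  | _, _, _, .handle hops hr hc, _, _, _, rfl => ⟨_, _, _, hops, hr, hc, .refl _⟩
  | _, _, _, .csub h s, _, _, _, hc =>
    let ⟨τ, ρ₀, ρ', hops, hr, hc, s'⟩ := h.handle_inv hc; ⟨τ, ρ₀, ρ', hops, hr, hc, s'.trans s⟩
  | _, _, _, .ret .., _, _, _, hc | _, _, _, .app .., _, _, _, hc
  | _, _, _, .ite .., _, _, _, hc | _, _, _, .letP .., _, _, _, hc
  | _, _, _, .letIp .., _, _, _, hc | _, _, _, .op .., _, _, _, hc => nomatch hc

theorem TC.not_proj {S} : ∀ {Γ c ρ}, TC S Γ c ρ → ∀ {v l}, c ≠ .proj v l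
  | _, _, _, .csub h _, _, _, hc => h.not_proj hc
  | _, _, _, .ret .., _, _, hc | _, _, _, .app .., _, _, hc | _, _, _, .ite .., _, _, hc
  | _, _, _, .letP .., _, _, hc | _, _, _, .letIp .., _, _, hc | _, _, _, .op .., _, _, hc
  | _, _, _, .handle .., _, _, hc => nomatch hc

theorem TC.ret_pure_inv {S Γ v τ} (h : TC S Γ (.ret v) (.pure τ)) : TV S Γ v τ := by
  obtain ⟨_, hv, s⟩ := h.ret_inv rfl
  cases s with | pure s => exact hv.vsub s

theorem TC.ret_eff_inv {S Γ v τ ρ₁ ρ₂} (h : TC S Γ (.ret v) (.eff τ ρ₁ ρ₂)) :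
    TV S Γ v τ ∧ SubC ρ₁ ρ₂ := by
  obtain ⟨_, hv, s⟩ := h.ret_inv rfl
  cases s with | embed s s' => exact ⟨hv.vsub s, s'⟩

theorem TC.not_pure_plug_op {S o v} (E : EC) :
    ∀ {Γ τ}, ¬ TC S Γ (plug E (.op o v)) (.pure τ) := by
  induction E with
  | hole => intro Γ τ h; nomatch (h.op_inv rfl).2
  | letE E _ ih =>
    intro Γ τ h
    rcases h.letin_inv rfl with ⟨_, _, h₁, _, _⟩ | ⟨_, _, _, _, _, _, _, s⟩
    · exact ih h₁
    · nomatch s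

theorem TC.plug_op_inv {S o v} (E : EC) : ∀ {Γ τ ρ ρ'},
    TC S Γ (plug E (.op o v)) (.eff τ ρ ρ') →
    TV S Γ v (S.arg o) ∧ SubC (S.ans2 o) ρ' ∧
      TC S (S.res o :: Γ) (plug (renameE Nat.succ E) (.ret (.var 0))) (.eff τ ρ (S.ans1 o)) := by
  induction E with
  | hole =>
    intro Γ τ ρ ρ' h
    obtain ⟨hv, s⟩ := h.op_inv rfl
    cases s with | ipure d e f => exact ⟨hv, f, .csub (.ret (.var rfl)) (.embed d e)⟩
  | letE E _ ih =>
    intro Γ τ ρ ρ' h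
    rcases h.letin_inv rfl with ⟨_, _, h₁, _, _⟩ | ⟨_, _, _, _, _, h₁, h₂, s⟩
    · exact absurd h₁ (not_pure_plug_op E)
    · cases s with
      | ipure d e f =>
        obtain ⟨hv, f₁, hE⟩ := ih h₁
        exact ⟨hv, f₁.trans f,
          .csub (.letIp hE (h₂.rename WellTypedRen.succ.lift)) (.ipure d e (.refl _))⟩

theorem TV.contOf {S Γ r ops E τ σ ρ ρ'}
    (hops : ∀ o, TC S (.arrow (S.res o) (S.ans1 o) :: S.arg o :: Γ) (ops o) (S.ans2 o))
    (hr : TC S (τ :: Γ) r ρ)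
    (hE : TC S (σ :: Γ) (plug (renameE Nat.succ E) (.ret (.var 0))) (.eff τ ρ ρ')) :
    TV S Γ (contOf r ops E) (.arrow σ ρ') :=
  .lam (.handle (fun o => (hops o).rename WellTypedRen.succ.lift.lift)
    (hr.rename WellTypedRen.succ.lift) hE)

theorem TC.letret_reduct {S Γ v c ρ} (h : TC S Γ (.letin (.ret v) c) ρ) :
    TC S Γ (subst1C c v) ρ := by
  rcases h.letin_inv rfl with ⟨_, _, h₁, h₂, s⟩ | ⟨_, _, _, _, _, h₁, h₂, s⟩
  · exact .csub (h₂.subst1 h₁.ret_pure_inv) s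
  · obtain ⟨hv, s₁⟩ := h₁.ret_eff_inv
    exact .csub (.csub (h₂.subst1 hv) (.ipure (.refl _) (.refl _) s₁)) s

theorem TC.lamapp_reduct {S Γ c v ρ} (h : TC S Γ (.app (.lam c) v) ρ) :
    TC S Γ (subst1C c v) ρ := by
  obtain ⟨_, _, hf, hv, s⟩ := h.app_inv rfl
  obtain ⟨_, _, hc, s'⟩ := hf.lam_inv rfl
  cases s' with
  | arrow d e => exact .csub (.csub (hc.subst1 (hv.vsub d)) e) s

theorem TC.fixapp_reduct {S Γ v v' ρ} (h : TC S Γ (.app (.fix v) v') ρ) :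
    TC S Γ (.app (subst1V v (.fix v)) v') ρ := by
  obtain ⟨_, _, hf, hv', s⟩ := h.app_inv rfl
  obtain ⟨_, hv, s'⟩ := hf.fix_inv rfl
  exact .csub (.app (.vsub (hv.subst1 (.fix hv)) s') hv') s

theorem TC.hret_reduct {S Γ r ops v ρ} (h : TC S Γ (.handle r ops (.ret v)) ρ) :
    TC S Γ (subst1C r v) ρ := by
  obtain ⟨_, _, _, _, hr, hc, s⟩ := h.handle_inv rfl
  obtain ⟨hv, s'⟩ := hc.ret_eff_inv
  exact .csub (hr.subst1 hv) (s'.trans s)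

theorem TC.hop_reduct {S Γ r ops E o v ρ} (h : TC S Γ (.handle r ops (plug E (.op o v))) ρ) :
    TC S Γ (substC (sub2 v (contOf r ops E)) (ops o)) ρ := by
  obtain ⟨_, _, _, hops, hr, hc, s⟩ := h.handle_inv rfl
  obtain ⟨hv, s', hE⟩ := TC.plug_op_inv E hc
  exact .csub ((hops o).subst (.sub2 hv (.contOf hops hr hE))) (s'.trans s)

/-- Preservation (subject reduction) for the ATM type system. -/
theorem atm_preservation (S : Sig) (Γ : List VTy) (c c' : Comp) (ρ : CTy)
    (h : TC S Γ c ρ) (hs : Step c c') : TC S Γ c' ρ := by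
  induction hs generalizing ρ with
  | letc _ ih =>
    rcases h.letin_inv rfl with ⟨_, _, h₁, h₂, s⟩ | ⟨_, _, _, _, _, h₁, h₂, s⟩
    · exact .csub (.letP (ih _ h₁) h₂) s
    · exact .csub (.letIp (ih _ h₁) h₂) s
  | letret => exact h.letret_reduct
  | lamapp => exact h.lamapp_reduct
  | fixapp => exact h.fixapp_reduct
  | iftrue => exact (h.ite_inv rfl).2.1
  | iffalse => exact (h.ite_inv rfl).2.2
  | han _ ih =>
    obtain ⟨_, _, _, hops, hr, hc, s⟩ := h.handle_inv rfl
    exact .csub (.handle hops hr (ih _ hc)) s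
  | hret => exact h.hret_reduct
  | hop => exact h.hop_reduct
  | projr => exact (h.not_proj rfl).elim

end LEH
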